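/- Let w*(x) = cos(nx) and C_h be the periodic Hilbert transform for the strip of depth h > 0. Then the function 2w*·C_h(w*') − 2C_h(w*·w*') − [w*²]/h, where [f] denotes the mean of f over [−π, π] and ' denotes d/dx, is L²-orthogonal to cos(nx) on [−π, π]; i.e., ∫_{−π}^{π} (2w*(x)C_h(w*')(x) − 2C_h(w* w*')(x) − [w*²]/h) cos(nx) dx = 0. -/
import Mathlib


noncomputable def coth (x : ℝ) : ℝ := Real.cosh x / Real.sinh x

open Real

lemma integral_cos_nat_mul (k : ℕ) (hk : 1 ≤ k) :
    (∫ x in (-π)..π, Real.cos (k * x)) = 0 := by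
  have hk0 : (k : ℝ) ≠ 0 := Nat.cast_ne_zero.mpr (by omega)
  have h := intervalIntegral.mul_integral_comp_mul_left (f := Real.cos) (c := (k : ℝ)) (a := -π) (b := π)
  rw [integral_cos] at h
  have h1 : Real.sin ((k : ℝ) * π) = 0 := Real.sin_nat_mul_pi k
  have h2 : Real.sin ((k : ℝ) * -π) = 0 := by
    rw [mul_neg, Real.sin_neg, h1, neg_zero]
  rw [h1, h2, sub_zero] at h
  exact (mul_eq_zero.mp h).resolve_left hk0

/-- Orthogonality of the second-order Fréchet-derivative term to the kernel
`cos(nx)`.  Here, with `w*(x) = cos(nx)`, we have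
`C_h(w*')(x) = n·coth(nh)·cos(nx)` and
`C_h(w*·w*')(x) = (n/2)·coth(2nh)·cos(2nx)`, and `[w*²]` is the mean of
`w*²` over one period. -/
theorem second_order_orthogonality (h : ℝ) (hh : 0 < h) (n : ℕ) (hn : 1 ≤ n) :
    let w : ℝ → ℝ := fun x => Real.cos (n * x)
    let Chw' : ℝ → ℝ := fun x => n * coth (n * h) * Real.cos (n * x)
    let Chww' : ℝ → ℝ := fun x => (n / 2) * coth (2 * n * h) * Real.cos (2 * n * x)
    let meanw2 : ℝ := (1 / (2 * π)) * ∫ x in (-π)..π, (w x) ^ 2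
    (∫ x in (-π)..π,
        (2 * w x * Chw' x - 2 * Chww' x - meanw2 / h) * Real.cos (n * x)) = 0 := by
  intro w Chw' Chww' meanw2
  set C := coth (n * h) with hC
  set D := coth (2 * n * h) with hD
  set m := meanw2 with hm
  set A1 : ℝ := (3 / 2) * n * C - (n / 2) * D - m / h with hA1
  set A2 : ℝ := (n / 2) * C - (n / 2) * D with hA2
  have key : ∀ x : ℝ,
      (2 * w x * Chw' x - 2 * Chww' x - m / h) * Real.cos (n * x)
        = A1 * Real.cos (n * x) + A2 * Real.cos ((3 * n : ℕ) * x) := by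
    intro x
    have h2 : Real.cos (2 * (n : ℝ) * x) = 2 * Real.cos ((n : ℝ) * x) ^ 2 - 1 := by
      rw [show (2 * (n : ℝ) * x) = 2 * ((n : ℝ) * x) by ring, Real.cos_two_mul]
    have h3 : Real.cos (((3 * n : ℕ) : ℝ) * x)
        = 4 * Real.cos ((n : ℝ) * x) ^ 3 - 3 * Real.cos ((n : ℝ) * x) := by
      rw [show (((3 * n : ℕ) : ℝ) * x) = 3 * ((n : ℝ) * x) by push_cast; ring,
        Real.cos_three_mul]
    simp only [w, Chw', Chww']
    rw [h2, h3, hA1, hA2]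
    ring
  rw [intervalIntegral.integral_congr (g := fun x =>
      A1 * Real.cos (n * x) + A2 * Real.cos ((3 * n : ℕ) * x)) (fun x _ => key x)]
  have i1 : IntervalIntegrable (fun x => A1 * Real.cos ((n : ℝ) * x)) MeasureTheory.volume (-π) π := by
    apply Continuous.intervalIntegrable; fun_prop
  have i2 : IntervalIntegrable (fun x => A2 * Real.cos (((3 * n : ℕ) : ℝ) * x)) MeasureTheory.volume (-π) π := by
    apply Continuous.intervalIntegrable; fun_prop
  rw [intervalIntegral.integral_add i1 i2, intervalIntegral.integral_const_mul,
    intervalIntegral.integral_const_mul, integral_cos_nat_mul n hn,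
    integral_cos_nat_mul (3 * n) (by omega)]
  ring
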